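/- arXiv:2501.08431 — 2 statements merged into one kernel-verified Lean document; each statement's English description precedes it below -/
import Mathlib

section
/- For all integers m, n ≥ 1 and every l ≥ 1, one has Zeb(m,n)_l ⊴ Zeb(m,n)_{l+1}; consequently, for every k ≥ 1 the zebra chain (Zeb(m,n)_1, Zeb(m,n)_2, …, Zeb(m,n)_k) is a face chain in the permutahedron 𝕡^{mn}. -/
/-- The weak-Bruhat comparison `τ ⊴ ρ` of (part-index encodings of) ordered
partitions of `{0,…,N−1}`: for all `i < j`, either `τ i < τ j` or `ρ i > ρ j`. -/
def OrdPartRel {N : ℕ} (τ ρ : Fin N → ℕ) : Prop :=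
  ∀ i j : Fin N, i < j → τ i < τ j ∨ ρ j < ρ i

/-- Identifying `i ∈ {0,…,mn−1}` with the grid point of row `r i = i / n` and
column `c i = i % n`, the value `v_l(i) = c i + (l−2)·(r i)` whose level sets
are the parts of the `l`-th zebra partition for `l ≥ 2`. -/
def zebVal (n l i : ℕ) : ℕ := i % n + (l - 2) * (i / n)

/-- The `l`-th term of the zebra chain, as an ordered partition of `{0,…,mn−1}`
encoded by its (0-based) part-index function.  For `l = 1` the parts are the
rows, ordered top to bottom, so the part index of `i` is its row `i / n`.
For `l ≥ 2` the parts are the level sets of `v_l`, ordered by decreasing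
value, so the part index of `i` is the number of distinct values of `v_l`
that are greater than `v_l(i)`. -/
def zeb (m n l : ℕ) : Fin (m * n) → ℕ := fun i =>
  if l = 1 then i.val / n
  else (((Finset.univ : Finset (Fin (m * n))).image fun j => zebVal n l j.val).filter
      fun x => zebVal n l i.val < x).card

/-!
Going from `Zeb_l` to `Zeb_{l+1}` (for `l ≥ 2`) adds the row index to the value: `v_{l+1} = v_l + r`.
Take `i < j` in reading order. If they lie in the same row, then `c i < c j` and so
`v_{l+1}(i) < v_{l+1}(j)`, i.e. `j` comes strictly before `i` in `Zeb_{l+1}`. If `i` lies in a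
higher row, then either `j` comes strictly before `i` already in `Zeb_l`, or `v_l(i) ≤ v_l(j)`,
and adding the rows `r i < r j` makes this strict in `Zeb_{l+1}`. For `l = 1` the rows themselves
are the parts of `Zeb_1`.
-/

theorem Finset.card_filter_lt_lt_of_lt {α : Type*} [Preorder α] [DecidableLT α] {s : Finset α}
    {a b : α} (hab : a < b) (hb : b ∈ s) :
    (s.filter (b < ·)).card < (s.filter (a < ·)).card := by
  refine Finset.card_lt_card ((Finset.ssubset_iff_of_subset ?_).mpr ⟨b, ?_, ?_⟩)
  · exact Finset.monotone_filter_right s fun _ _ => hab.trans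
  · exact Finset.mem_filter.mpr ⟨hb, hab⟩
  · simp

theorem Nat.div_lt_div_or_mod_lt_mod_of_lt {i j : ℕ} (n : ℕ) (h : i < j) :
    i / n < j / n ∨ (i / n = j / n ∧ i % n < j % n) := by
  rcases lt_trichotomy (i / n) (j / n) with hlt | heq | hgt
  · exact Or.inl hlt
  · refine Or.inr ⟨heq, ?_⟩
    have hi := Nat.div_add_mod i n
    have hj := Nat.div_add_mod j n
    rw [heq] at hi
    omega
  · exact absurd (Nat.div_le_div_right (c := n) h.le) (not_le.mpr hgt)

theorem zebVal_succ {n l : ℕ} (hl : 2 ≤ l) (i : ℕ) :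
    zebVal n (l + 1) i = zebVal n l i + i / n := by
  obtain ⟨k, rfl⟩ := Nat.exists_eq_add_of_le hl
  simp only [zebVal, show 2 + k + 1 - 2 = k + 1 by omega, show 2 + k - 2 = k by omega]
  ring

theorem zeb_lt_zeb_of_zebVal_lt {m n l : ℕ} (hl : l ≠ 1) {i j : Fin (m * n)}
    (h : zebVal n l j < zebVal n l i) : zeb m n l i < zeb m n l j := by
  simp only [zeb, if_neg hl]
  exact Finset.card_filter_lt_lt_of_lt h
    (Finset.mem_image_of_mem (fun k : Fin (m * n) => zebVal n l k) (Finset.mem_univ i))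

theorem zeb_rel_zeb_succ (m n : ℕ) {l : ℕ} (hl : 1 ≤ l) :
    OrdPartRel (zeb m n l) (zeb m n (l + 1)) := by
  intro i j hij
  have hsucc : l + 1 ≠ 1 := by omega
  rcases Nat.div_lt_div_or_mod_lt_mod_of_lt n (Fin.lt_def.mp hij) with hrow | ⟨hrow, hcol⟩
  · rcases eq_or_lt_of_le hl with rfl | hl2
    · left
      simpa [zeb] using hrow
    rcases lt_or_ge (zebVal n l j) (zebVal n l i) with hv | hv
    · exact Or.inl (zeb_lt_zeb_of_zebVal_lt (by omega) hv)
    · right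
      apply zeb_lt_zeb_of_zebVal_lt hsucc
      rw [zebVal_succ hl2, zebVal_succ hl2]
      omega
  · right
    apply zeb_lt_zeb_of_zebVal_lt hsucc
    simp only [zebVal, hrow]
    omega

theorem zebra_is_face_chain_general (m n : ℕ) :
    (∀ l : ℕ, 1 ≤ l → OrdPartRel (zeb m n l) (zeb m n (l + 1))) ∧
    (∀ k : ℕ, 1 ≤ k → List.Chain' OrdPartRel ((List.range' 1 k).map (zeb m n))) := by
  refine ⟨fun l hl => zeb_rel_zeb_succ m n hl, fun k _ => ?_⟩
  refine (List.isChain_map _).mpr ?_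
  refine (List.isChain_range' 1 k 1).imp_of_mem_imp fun a b ha _ hab => ?_
  rw [hab]
  exact zeb_rel_zeb_succ m n (List.mem_range'_1.mp ha).1

/-- For all `m, n ≥ 1` and every `l ≥ 1`, one has `Zeb(m,n)_l ⊴ Zeb(m,n)_{l+1}`;
consequently, for every `k ≥ 1` the zebra chain `Zeb(m,n)_1, …, Zeb(m,n)_k` is
a face chain in the permutahedron `𝕡^{mn}`. -/
theorem zebra_is_face_chain (m n : ℕ) (hm : 1 ≤ m) (hn : 1 ≤ n) :
    (∀ l : ℕ, 1 ≤ l → OrdPartRel (zeb m n l) (zeb m n (l + 1))) ∧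
    (∀ k : ℕ, 1 ≤ k → List.Chain' OrdPartRel ((List.range' 1 k).map (zeb m n))) :=
  zebra_is_face_chain_general m n
end

section
/- For integers k ≥ 2 and n ≥ max(1, k−2), the excess of the zebra chain (Zeb(n,n)_1, …, Zeb(n,n)_k) in the permutahedron 𝕡^{n²} equals (1−k)·n² + (1 + k(k−1)/2)·n + (2k − 3 − k(k−1)/2). -/
/-- The number of parts of `Zeb(m,n)_l`. -/
def zebParts (m n l : ℕ) : ℕ := ((Finset.univ : Finset (Fin (m * n))).image (zeb m n l)).card

lemma rank_lt (S : Finset ℕ) {x y : ℕ} (hy : y ∈ S) (hxy : x < y) :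
    (S.filter fun z => y < z).card < (S.filter fun z => x < z).card := by
  apply Finset.card_lt_card
  have hsub : (S.filter fun z => y < z) ⊆ S.filter fun z => x < z := by
    intro z hz
    simp only [Finset.mem_filter] at hz ⊢
    exact ⟨hz.1, lt_trans hxy hz.2⟩
  rw [Finset.ssubset_iff_of_subset hsub]
  exact ⟨y, Finset.mem_filter.mpr ⟨hy, hxy⟩, by simp⟩

lemma rank_injOn (S : Finset ℕ) :
    Set.InjOn (fun x => (S.filter fun y => x < y).card) (S : Set ℕ) := by
  intro x hx y hy hxy
  have hxy' : (S.filter fun z => x < z).card = (S.filter fun z => y < z).card := hxy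
  by_contra hne
  rcases lt_or_gt_of_ne hne with h | h
  · have := rank_lt S hy h; omega
  · have := rank_lt S hx h; omega

lemma image_zebVal (n d : ℕ) (hn : 1 ≤ n) (hd : d ≤ n) :
    ((Finset.univ : Finset (Fin (n * n))).image fun j => j.val % n + d * (j.val / n))
      = Finset.range (d * (n - 1) + n) := by
  have hnn : n + (n - 1) * n = n * n := by
    cases n with
    | zero => rfl
    | succ m => simp [Nat.succ_sub_one]; ring
  apply Finset.Subset.antisymm
  · intro x hx
    simp only [Finset.mem_image, Finset.mem_univ, true_and] at hx
    obtain ⟨j, rfl⟩ := hx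
    have h1 : j.val % n < n := Nat.mod_lt _ hn
    have h2 : j.val / n < n := Nat.div_lt_of_lt_mul (by simpa using j.isLt)
    have : d * (j.val / n) ≤ d * (n - 1) := Nat.mul_le_mul_left d (by omega)
    simp only [Finset.mem_range]
    omega
  · intro x hx
    simp only [Finset.mem_range] at hx
    simp only [Finset.mem_image, Finset.mem_univ, true_and]
    by_cases hc : x / d ≤ n - 1
    · have hxd : x % d < n := by
        rcases Nat.eq_zero_or_pos d with h | h
        · rw [h] at hx ⊢; omega
        · exact lt_of_lt_of_le (Nat.mod_lt _ h) hd
      refine ⟨⟨x % d + (x / d) * n, ?_⟩, ?_⟩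
      · have hb : (x / d) * n ≤ (n - 1) * n := Nat.mul_le_mul_right n hc
        calc x % d + x / d * n < n + (n - 1) * n := by omega
          _ = n * n := hnn
      · simp only [Nat.add_mul_mod_self_right, Nat.add_mul_div_right _ _ (by omega : 0 < n)]
        rw [Nat.mod_eq_of_lt hxd, Nat.div_eq_of_lt hxd]
        simp only [Nat.zero_add]
        exact Nat.mod_add_div x d
    · have hd0 : 0 < d := by
        rcases Nat.eq_zero_or_pos d with h | h
        · exfalso; apply hc; simp [h]
        · exact h
      have hge : d * (n - 1) ≤ x :=
        le_trans (Nat.mul_le_mul_left d (by omega : n - 1 ≤ x / d)) (Nat.mul_div_le x d)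
      have hlt : x - d * (n - 1) < n := by omega
      refine ⟨⟨(x - d * (n - 1)) + (n - 1) * n, ?_⟩, ?_⟩
      · omega
      · simp only [Nat.add_mul_mod_self_right, Nat.add_mul_div_right _ _ (by omega : 0 < n)]
        rw [Nat.mod_eq_of_lt hlt, Nat.div_eq_of_lt hlt]
        simp only [Nat.zero_add]
        omega

lemma zebParts_one (n : ℕ) (hn : 1 ≤ n) : zebParts n n 1 = n := by
  have himg : (Finset.univ : Finset (Fin (n * n))).image (zeb n n 1) = Finset.range n := by
    apply Finset.Subset.antisymm
    · intro x hx
      simp only [Finset.mem_image, Finset.mem_univ, true_and, zeb, if_pos rfl] at hx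
      obtain ⟨j, rfl⟩ := hx
      simp only [Finset.mem_range]
      exact Nat.div_lt_of_lt_mul (by simpa using j.isLt)
    · intro r hr
      simp only [Finset.mem_range] at hr
      simp only [Finset.mem_image, Finset.mem_univ, true_and, zeb, if_pos rfl]
      refine ⟨⟨r * n, ?_⟩, ?_⟩
      · exact Nat.mul_lt_mul_of_pos_right hr (by omega)
      · simp [Nat.mul_div_cancel _ (by omega : 0 < n)]
  rw [zebParts, himg, Finset.card_range]

lemma zebParts_ge2 (n l : ℕ) (hn : 1 ≤ n) (hl : 2 ≤ l) (hd : l - 2 ≤ n) :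
    zebParts n n l = (l - 2) * (n - 1) + n := by
  have hne : l ≠ 1 := by omega
  have hzeb : zeb n n l = fun i =>
      (fun x => ((((Finset.univ : Finset (Fin (n * n))).image fun j => zebVal n l j.val).filter
        fun y => x < y).card)) (zebVal n l i.val) := by
    funext i
    simp [zeb, hne]
  rw [zebParts, hzeb]
  have h2 : ((Finset.univ : Finset (Fin (n * n))).image fun i =>
      (fun x => ((((Finset.univ : Finset (Fin (n * n))).image fun j => zebVal n l j.val).filter
        fun y => x < y).card)) (zebVal n l i.val))
    = (((Finset.univ : Finset (Fin (n * n))).image fun j => zebVal n l j.val).image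
      fun x => ((((Finset.univ : Finset (Fin (n * n))).image fun j => zebVal n l j.val).filter
        fun y => x < y).card)) := by rw [Finset.image_image]; rfl
  rw [h2]
  rw [Finset.card_image_of_injOn (rank_injOn _)]
  have : ((Finset.univ : Finset (Fin (n * n))).image fun j => zebVal n l j.val)
      = Finset.range ((l - 2) * (n - 1) + n) := image_zebVal n (l - 2) hn hd
  rw [this, Finset.card_range]

/-- For `k ≥ 2` and `n ≥ max 1 (k−2)`, the excess of the zebra chain
`Zeb(n,n)_1, …, Zeb(n,n)_k` in the permutahedron `𝕡^{n²}` (whose face for an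
ordered partition with `p` parts has dimension `n² − p`) equals
`(1−k)·n² + (1 + k(k−1)/2)·n + (2k − 3 − k(k−1)/2)`. -/
theorem zebra_excess (k n : ℕ) (hk : 2 ≤ k) (hn : max 1 (k - 2) ≤ n) :
    ((n * n : ℤ) - 2) - ∑ i ∈ Finset.range k, (((n * n : ℤ) - zebParts n n (i + 1)) - 1)
      = (1 - (k : ℤ)) * (n * n) + (1 + (k : ℤ) * ((k : ℤ) - 1) / 2) * n
        + (2 * (k : ℤ) - 3 - (k : ℤ) * ((k : ℤ) - 1) / 2) := by
  obtain ⟨k', rfl⟩ : ∃ k', k = k' + 2 := ⟨k - 2, by omega⟩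
  simp only [max_le_iff] at hn
  have hn1 : 1 ≤ n := hn.1
  have hk' : k' ≤ n := by omega
  -- peel off the i = 0 term
  rw [show k' + 2 = (k' + 1) + 1 from rfl, Finset.sum_range_succ']
  have h0 : ((n * n : ℤ) - zebParts n n (0 + 1)) - 1 = (n * n : ℤ) - n - 1 := by
    rw [show (0 : ℕ) + 1 = 1 from rfl, zebParts_one n hn1]
  rw [h0]
  have hcongr : ∑ i ∈ Finset.range (k' + 1), (((n * n : ℤ) - zebParts n n (i + 1 + 1)) - 1)
      = ∑ i ∈ Finset.range (k' + 1), ((n * n : ℤ) - ((i : ℤ) * ((n : ℤ) - 1) + n) - 1) := by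
    apply Finset.sum_congr rfl
    intro i hi
    simp only [Finset.mem_range] at hi
    have : zebParts n n (i + 1 + 1) = i * (n - 1) + n := by
      have := zebParts_ge2 n (i + 2) hn1 (by omega) (by omega)
      simpa using this
    rw [this]
    push_cast [Nat.cast_sub hn1]
    ring
  rw [hcongr]
  set G : ℕ := ∑ i ∈ Finset.range (k' + 1), i with hGdef
  have hG : (G : ℤ) * 2 = ((k' : ℤ) + 1) * (k' : ℤ) := by
    have h := Finset.sum_range_id_mul_two (k' + 1)
    have : (G * 2 : ℕ) = (k' + 1) * k' := by
      rw [hGdef]; simpa using h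
    have := congrArg (Nat.cast : ℕ → ℤ) this
    push_cast at this
    linarith
  have hsum : ∑ i ∈ Finset.range (k' + 1), ((n * n : ℤ) - ((i : ℤ) * ((n : ℤ) - 1) + n) - 1)
      = ((k' : ℤ) + 1) * ((n * n : ℤ) - n - 1) - (G : ℤ) * ((n : ℤ) - 1) := by
    rw [Finset.sum_sub_distrib, Finset.sum_sub_distrib, Finset.sum_add_distrib,
      Finset.sum_const, Finset.sum_const, Finset.sum_const, ← Finset.sum_mul]
    have : (∑ i ∈ Finset.range (k' + 1), (i : ℤ)) = (G : ℤ) := by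
      rw [hGdef]; push_cast; rfl
    rw [this]
    simp [Finset.card_range]
    ring
  rw [hsum]
  have hdiv : ((k' + 2 : ℕ) : ℤ) * (((k' + 2 : ℕ) : ℤ) - 1) / 2 = (G : ℤ) + (k' : ℤ) + 1 := by
    have h2 : ((k' + 2 : ℕ) : ℤ) * (((k' + 2 : ℕ) : ℤ) - 1) = 2 * ((G : ℤ) + (k' : ℤ) + 1) := by
      push_cast
      linarith
    rw [h2, Int.mul_ediv_cancel_left _ two_ne_zero]
  rw [hdiv]
  push_cast
  ring
end
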